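/- There exists an instance with two binary attributes, six candidates, k = 3, and a target distribution where every L1-optimal (and every (1,max)-optimal and max-optimal) committee A satisfies r_1^1(A) > r_1^2(A) even though π_1^1 < π_1^2, i.e., the non-reversal property fails. Concretely: candidates a,b,c have vector (x_1^1, x_2^1) and d,e,f have (x_1^2, x_2^2); target π_1 = (0.35, 0.65), π_2 = (1, 0). -/
import Mathlib


open Finset

/-- Six candidates (0,1,2 = a,b,c with vector (x_1^1, x_2^1); 3,4,5 = d,e,f with
vector (x_1^2, x_2^2)), two binary attributes with values in `Fin 2`
(0 encodes `x_i^1`, 1 encodes `x_i^2`). -/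
def cval : Fin 6 → Fin 2 → Fin 2 := fun c _ => if c.val < 3 then 0 else 1

/-- Target: π_1 = (0.35, 0.65), π_2 = (1, 0). -/
noncomputable def tgt : Fin 2 → Fin 2 → ℝ := ![![0.35, 0.65], ![1, 0]]

/-- Fraction of the size-3 committee with value `j` on attribute `i`. -/
noncomputable def rep (S : Finset (Fin 6)) (i j : Fin 2) : ℝ :=
  ((S.filter (fun c => cval c i = j)).card : ℝ) / 3

noncomputable def loss1 (S : Finset (Fin 6)) : ℝ :=
  ∑ i, ∑ j, |rep S i j - tgt i j|

noncomputable def loss1max (S : Finset (Fin 6)) : ℝ :=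
  ∑ i, ⨆ j, |rep S i j - tgt i j|

noncomputable def lossMax (S : Finset (Fin 6)) : ℝ :=
  ⨆ i, ⨆ j, |rep S i j - tgt i j|

def nf (S : Finset (Fin 6)) : ℕ := (S.filter (fun c => c.val < 3)).card

lemma rep0 (S : Finset (Fin 6)) (i : Fin 2) : rep S i 0 = (nf S : ℝ) / 3 := by
  have he : S.filter (fun c => cval c i = 0) = S.filter (fun c => c.val < 3) := by
    apply Finset.filter_congr
    intro c _
    simp only [cval]
    split <;> simp_all
  unfold rep nf
  rw [he]

lemma rep1 (S : Finset (Fin 6)) (hS : S.card = 3) (i : Fin 2) :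
    rep S i 1 = (3 - (nf S : ℝ)) / 3 := by
  have h := Finset.card_filter_add_card_filter_not (s := S)
    (p := fun c => c.val < 3)
  rw [hS] at h
  have he : S.filter (fun c => cval c i = 1) = S.filter (fun c => ¬ c.val < 3) := by
    apply Finset.filter_congr
    intro c _
    simp only [cval]
    split <;> simp_all
  unfold rep nf
  rw [he]
  have : ((S.filter (fun c => c.val < 3)).card : ℝ)
      + ((S.filter (fun c => ¬ c.val < 3)).card : ℝ) = 3 := by exact_mod_cast h
  linarith

lemma sup2 (f : Fin 2 → ℝ) : (⨆ j, f j) = max (f 0) (f 1) := by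
  apply le_antisymm
  · exact ciSup_le (by intro j; fin_cases j <;> simp [le_max_left, le_max_right])
  · exact max_le (le_ciSup (Set.Finite.bddAbove (Set.finite_range f)) 0)
      (le_ciSup (Set.Finite.bddAbove (Set.finite_range f)) 1)

lemma tgt00 : tgt 0 0 = 0.35 := by norm_num [tgt]
lemma tgt01 : tgt 0 1 = 0.65 := by norm_num [tgt]
lemma tgt10 : tgt 1 0 = 1 := by norm_num [tgt]
lemma tgt11 : tgt 1 1 = 0 := by norm_num [tgt]

lemma loss1_eq (S : Finset (Fin 6)) (hS : S.card = 3) :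
    loss1 S = |(nf S : ℝ)/3 - 0.35| + |(3 - (nf S : ℝ))/3 - 0.65|
      + |(nf S : ℝ)/3 - 1| + |(3 - (nf S : ℝ))/3| := by
  simp only [loss1, Fin.sum_univ_two, rep0, rep1 S hS, tgt00, tgt01, tgt10, tgt11]
  ring

lemma loss1max_eq (S : Finset (Fin 6)) (hS : S.card = 3) :
    loss1max S = max |(nf S : ℝ)/3 - 0.35| |(3 - (nf S : ℝ))/3 - 0.65|
      + max |(nf S : ℝ)/3 - 1| |(3 - (nf S : ℝ))/3| := by
  simp only [loss1max, Fin.sum_univ_two, sup2, rep0, rep1 S hS, tgt00, tgt01, tgt10, tgt11]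
  norm_num

lemma lossMax_eq (S : Finset (Fin 6)) (hS : S.card = 3) :
    lossMax S = max (max |(nf S : ℝ)/3 - 0.35| |(3 - (nf S : ℝ))/3 - 0.65|)
      (max |(nf S : ℝ)/3 - 1| |(3 - (nf S : ℝ))/3|) := by
  simp only [lossMax, sup2, rep0, rep1 S hS, tgt00, tgt01, tgt10, tgt11]
  norm_num

lemma nfA : nf ({0,1,2} : Finset (Fin 6)) = 3 := by decide
lemma nfB : nf ({0,1,3} : Finset (Fin 6)) = 2 := by decide
lemma cardA : ({0,1,2} : Finset (Fin 6)).card = 3 := by decide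
lemma cardB : ({0,1,3} : Finset (Fin 6)).card = 3 := by decide

/-- Non-reversal fails: although π_1^1 < π_1^2, every committee of size 3 that is
optimal for any of the three loss functions has r_1^1 > r_1^2. -/
theorem stmt15 :
    tgt 0 0 < tgt 0 1 ∧
    ∀ S : Finset (Fin 6), S.card = 3 →
      ((∀ T : Finset (Fin 6), T.card = 3 → loss1 S ≤ loss1 T) ∨
       (∀ T : Finset (Fin 6), T.card = 3 → loss1max S ≤ loss1max T) ∨
       (∀ T : Finset (Fin 6), T.card = 3 → lossMax S ≤ lossMax T)) →
      rep S 0 0 > rep S 0 1 := by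
  constructor
  · rw [tgt00, tgt01]; norm_num
  intro S hS hopt
  have hle : nf S ≤ 3 := hS ▸ Finset.card_filter_le S _
  have h2 : 2 ≤ nf S := by
    by_contra hc
    push_neg at hc
    interval_cases h : nf S <;>
    · rcases hopt with h1 | h1 | h1
      · have := h1 _ cardA
        rw [loss1_eq S hS, loss1_eq _ cardA, nfA, h] at this
        norm_num [abs_of_nonneg, abs_of_nonpos] at this
      · have := h1 _ cardA
        rw [loss1max_eq S hS, loss1max_eq _ cardA, nfA, h] at this
        norm_num [abs_of_nonneg, abs_of_nonpos] at this
      · have := h1 _ cardB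
        rw [lossMax_eq S hS, lossMax_eq _ cardB, nfB, h] at this
        norm_num [abs_of_nonneg, abs_of_nonpos] at this
  rw [rep0, rep1 S hS]
  have : (2 : ℝ) ≤ (nf S : ℝ) := by exact_mod_cast h2
  have h3 : ((nf S : ℝ)) ≤ 3 := by exact_mod_cast hle
  linarith
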